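/- arXiv:1508.02053 — 6 statements merged into one kernel-verified Lean document; each statement's English description precedes it below -/
import Mathlib

section
/- Let n be a positive integer, let r be a real number with 0 < r < n, and let B ⊆ ℝⁿ be a Borel set with 0 < H^r(B) < ∞. Then B can be covered by cov(N) many H^r-null sets, where cov(N) is the least cardinality of a family of Lebesgue null subsets of ℝⁿ whose union is ℝⁿ. That is, there is a family of H^r-null sets of cardinality at most cov(N) whose union contains B. -/
/-!
Normalise `μH[r]` on `B` to an atomless probability measure `μ`, and let `ν` be a probability
measure with the same null sets as Lebesgue measure. On standard Borel spaces an atomless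
probability measure can be pushed forward onto any probability measure: after embedding both
spaces in `ℝ`, the cdf of `μ` carries `μ` to the uniform measure on `(0, 1)`, which the quantile
function of `ν` carries to `ν`. A map `g` with `g₊μ = ν` pulls every Lebesgue null set back to a
set meeting `B` in an `H^r`-null set, so pulling back a cover of `ℝⁿ` by `cov(N)` Lebesgue null
sets covers `B` by as many `H^r`-null sets.
-/

open MeasureTheory Set
open scoped ENNReal MeasureTheory

noncomputable section


/-- `covOf J` is the least cardinality of a subfamily of `J` whose union is everything. -/
def covOf {α : Type*} (J : Set (Set α)) : Cardinal :=
  sInf { c : Cardinal | ∃ S ⊆ J, ⋃₀ S = univ ∧ Cardinal.mk S = c }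

open Filter Topology ProbabilityTheory

namespace ProbabilityTheory

section Real

variable (μ : Measure ℝ)

lemma continuous_cdf [IsProbabilityMeasure μ] [NullSingletonClass μ] : Continuous (cdf μ) := by
  refine continuous_iff_continuousAt.2 fun x => continuousAt_iff_continuous_left_right.2
    ⟨?_, (cdf μ).right_continuous x⟩
  rw [← continuousWithinAt_Iio_iff_Iic, (monotone_cdf μ).continuousWithinAt_Iio_iff_leftLim_eq]
  have h := (cdf μ).measure_singleton x
  rw [measure_cdf, measure_singleton, eq_comm, ENNReal.ofReal_eq_zero, sub_nonpos] at h
  exact le_antisymm ((monotone_cdf μ).leftLim_le le_rfl) h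

/-- The quantile function of `μ`; it is only meaningful on `Ioo 0 1`, elsewhere the infimum
is taken over an empty or unbounded set. -/
def quantile (u : ℝ) : ℝ := sInf {x | u ≤ cdf μ x}

lemma quantile_le_iff {u : ℝ} (hu : u ∈ Ioo 0 1) (x : ℝ) : quantile μ u ≤ x ↔ u ≤ cdf μ x := by
  have hne : {x | u ≤ cdf μ x}.Nonempty :=
    ((tendsto_cdf_atTop μ).eventually (eventually_gt_nhds hu.2)).exists.imp fun _ => le_of_lt
  have hbdd : BddBelow {x | u ≤ cdf μ x} := by
    obtain ⟨x₀, hx₀⟩ := ((tendsto_cdf_atBot μ).eventually (eventually_lt_nhds hu.1)).exists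
    exact ⟨x₀, fun z hz => ((monotone_cdf μ).reflect_lt (hx₀.trans_le hz)).le⟩
  refine ⟨fun h => ?_, fun h => csInf_le hbdd h⟩
  refine ge_of_tendsto ((cdf μ).right_continuous x |>.mono Ioi_subset_Ici_self)
    (eventually_nhdsWithin_of_forall fun x' hx' => ?_)
  obtain ⟨z, hz, hzx⟩ := exists_lt_of_csInf_lt hne (h.trans_lt hx')
  exact hz.trans (monotone_cdf μ hzx.le)

lemma monotoneOn_quantile : MonotoneOn (quantile μ) (Ioo 0 1) := fun _ hu _ hu' h =>
  (quantile_le_iff μ hu _).2 (h.trans ((quantile_le_iff μ hu' _).1 le_rfl))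

lemma aemeasurable_quantile : AEMeasurable (quantile μ) (volume.restrict (Ioo 0 1)) :=
  aemeasurable_restrict_of_monotoneOn measurableSet_Ioo (monotoneOn_quantile μ)

lemma map_quantile [IsProbabilityMeasure μ] : (volume.restrict (Ioo 0 1)).map (quantile μ) = μ := by
  have : IsFiniteMeasure (volume.restrict (Ioo (0 : ℝ) 1)) := ⟨by simp⟩
  refine Measure.ext_of_Iic _ _ fun x => ?_
  have hpre : quantile μ ⁻¹' Iic x ∩ Ioo 0 1 = Iic (cdf μ x) ∩ Ioo 0 1 := by
    ext u
    simp only [mem_inter_iff, mem_preimage, mem_Iic]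
    exact ⟨fun ⟨h, hu⟩ => ⟨(quantile_le_iff μ hu x).1 h, hu⟩,
      fun ⟨h, hu⟩ => ⟨(quantile_le_iff μ hu x).2 h, hu⟩⟩
  rw [Measure.map_apply_of_aemeasurable (aemeasurable_quantile μ) measurableSet_Iic,
    Measure.restrict_apply' measurableSet_Ioo, hpre, ← Measure.restrict_apply' measurableSet_Ioo,
    Measure.restrict_congr_set Ioo_ae_eq_Ioc, Measure.restrict_apply' measurableSet_Ioc,
    Iic_inter_Ioc_of_le (cdf_le_one μ x), Real.volume_Ioc, sub_zero, ofReal_cdf]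

lemma cdf_quantile [IsProbabilityMeasure μ] [NullSingletonClass μ] {u : ℝ} (hu : u ∈ Ioo 0 1) :
    cdf μ (quantile μ u) = u := by
  refine le_antisymm ?_ ((quantile_le_iff μ hu _).1 le_rfl)
  refine le_of_tendsto (x := 𝓝[<] (quantile μ u))
    ((continuous_cdf μ).continuousAt.tendsto.mono_left nhdsWithin_le_nhds)
    (eventually_nhdsWithin_of_forall fun x hx => ?_)
  exact (lt_of_not_ge fun h => not_le.2 hx ((quantile_le_iff μ hu x).2 h)).le

lemma map_cdf [IsProbabilityMeasure μ] [NullSingletonClass μ] :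
    μ.map (cdf μ) = volume.restrict (Ioo 0 1) :=
  calc μ.map (cdf μ) = ((volume.restrict (Ioo 0 1)).map (quantile μ)).map (cdf μ) := by
        rw [map_quantile]
    _ = (volume.restrict (Ioo 0 1)).map (cdf μ ∘ quantile μ) :=
        AEMeasurable.map_map_of_aemeasurable (monotone_cdf μ).measurable.aemeasurable
          (aemeasurable_quantile μ)
    _ = (volume.restrict (Ioo 0 1)).map id := by
        refine Measure.map_congr ?_
        filter_upwards [ae_restrict_mem measurableSet_Ioo] with u hu using cdf_quantile μ hu
    _ = volume.restrict (Ioo 0 1) := Measure.map_id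

variable [IsProbabilityMeasure μ] [NullSingletonClass μ] (ν : Measure ℝ)

lemma aemeasurable_quantile_comp_cdf : AEMeasurable (quantile ν ∘ cdf μ) μ :=
  AEMeasurable.comp_aemeasurable (by rw [map_cdf]; exact aemeasurable_quantile ν)
    (monotone_cdf μ).measurable.aemeasurable

lemma map_quantile_comp_cdf [IsProbabilityMeasure ν] : μ.map (quantile ν ∘ cdf μ) = ν := by
  rw [← AEMeasurable.map_map_of_aemeasurable (by rw [map_cdf]; exact aemeasurable_quantile ν)
    (monotone_cdf μ).measurable.aemeasurable, map_cdf, map_quantile]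

end Real

theorem exists_aemeasurable_map_eq {X Y : Type*} [MeasurableSpace X] [StandardBorelSpace X]
    [MeasurableSpace Y] [StandardBorelSpace Y] (μ : Measure X) [IsProbabilityMeasure μ]
    [NullSingletonClass μ] (ν : Measure Y) [IsProbabilityMeasure ν] :
    ∃ g : X → Y, AEMeasurable g μ ∧ μ.map g = ν := by
  have he := measurableEmbedding_embeddingReal X
  have hf := measurableEmbedding_embeddingReal Y
  have := Measure.isProbabilityMeasure_map (μ := μ) he.measurable.aemeasurable
  have := Measure.isProbabilityMeasure_map (μ := ν) hf.measurable.aemeasurable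
  have : NullSingletonClass (μ.map (embeddingReal X)) := ⟨fun y => by
    rw [he.map_apply]
    exact (subsingleton_singleton.preimage he.injective).measure_zero μ⟩
  obtain ⟨ψ, hψ, hψf⟩ :=
    hf.exists_measurable_extend measurable_id fun _ => nonempty_of_isProbabilityMeasure ν
  set g' := quantile (ν.map (embeddingReal Y)) ∘ cdf (μ.map (embeddingReal X))
  have hg' := aemeasurable_quantile_comp_cdf (μ.map (embeddingReal X)) (ν.map (embeddingReal Y))
  refine ⟨ψ ∘ g' ∘ embeddingReal X, hψ.comp_aemeasurable (hg'.comp_measurable he.measurable), ?_⟩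
  calc μ.map (ψ ∘ g' ∘ embeddingReal X) = ((μ.map (embeddingReal X)).map g').map ψ := by
        rw [AEMeasurable.map_map_of_aemeasurable hg' he.measurable.aemeasurable,
          AEMeasurable.map_map_of_aemeasurable hψ.aemeasurable (hg'.comp_measurable he.measurable)]
    _ = ν := by
        rw [map_quantile_comp_cdf, Measure.map_map hψ hf.measurable, hψf, Measure.map_id]


lemma measure_inter_eq_zero_of_cond_eq_zero {α : Type*} [MeasurableSpace α] {μ : Measure α}
    {s t : Set α} (hs : μ s ≠ ∞) (h : μ[t|s] = 0) : μ (s ∩ t) = 0 := by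
  rw [cond, Measure.smul_apply, smul_eq_mul, mul_eq_zero, ENNReal.inv_eq_zero] at h
  rw [inter_comm]
  exact Measure.measure_inter_eq_zero_of_restrict (h.resolve_left hs)

end ProbabilityTheory

lemma MeasureTheory.sUnion_setOf_measure_eq_zero {α : Type*} [MeasurableSpace α] (μ : Measure α)
    [NullSingletonClass μ] : ⋃₀ {A | μ A = 0} = univ :=
  eq_univ_of_forall fun x => ⟨{x}, measure_singleton x, rfl⟩

lemma exists_sUnion_eq_univ_card_eq_covOf {α : Type*} {J : Set (Set α)} (hJ : ⋃₀ J = univ) :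
    ∃ S ⊆ J, ⋃₀ S = univ ∧ Cardinal.mk S = covOf J :=
  csInf_mem (s := {c | ∃ S ⊆ J, ⋃₀ S = univ ∧ Cardinal.mk S = c})
    ⟨_, J, subset_rfl, hJ, rfl⟩

theorem stmt3_general (n : ℕ) (r : ℝ) (hn : 1 ≤ n) (hr0 : 0 < r)
    (B : Set (EuclideanSpace ℝ (Fin n)))
    (hpos : 0 < μH[r] B) (hfin : μH[r] B < ⊤) :
    ∃ S : Set (Set (EuclideanSpace ℝ (Fin n))),
      (∀ A ∈ S, μH[r] A = 0) ∧
      Cardinal.mk S ≤ covOf {A : Set (EuclideanSpace ℝ (Fin n)) | volume A = 0} ∧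
      B ⊆ ⋃₀ S := by
  have : Nonempty (Fin n) := ⟨⟨0, hn⟩⟩
  have := Measure.nullSingletonClass_hausdorff (EuclideanSpace ℝ (Fin n)) hr0
  have := cond_isProbabilityMeasure_of_finite hpos.ne' hfin.ne
  have : NullSingletonClass μH[r][|B] := ⟨fun x => cond_absolutelyContinuous (measure_singleton x)⟩
  obtain ⟨g, hg, hmap⟩ := exists_aemeasurable_map_eq μH[r][|B]
    (volume : Measure (EuclideanSpace ℝ (Fin n))).toFinite
  have hnull (A) (hA : volume A = 0) : μH[r] (B ∩ g ⁻¹' A) = 0 :=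
    measure_inter_eq_zero_of_cond_eq_zero hfin.ne
      (Measure.preimage_null_of_map_null hg (hmap ▸ toFinite_apply_eq_zero_iff.2 hA))
  obtain ⟨S₀, hS₀null, hS₀U, hS₀card⟩ :=
    exists_sUnion_eq_univ_card_eq_covOf
      (sUnion_setOf_measure_eq_zero (volume : Measure (EuclideanSpace ℝ (Fin n))))
  refine ⟨(fun A => B ∩ g ⁻¹' A) '' S₀, ?_, Cardinal.mk_image_le.trans hS₀card.le, ?_⟩
  · rintro _ ⟨A, hA, rfl⟩
    exact hnull A (hS₀null hA)
  · intro x hx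
    obtain ⟨A, hA, hgx⟩ : g x ∈ ⋃₀ S₀ := hS₀U ▸ mem_univ _
    exact ⟨_, ⟨A, hA, rfl⟩, hx, hgx⟩

/-- A Borel set of positive finite `H^r`-measure can be covered by `cov(N)` many
`H^r`-null sets, where `N` is the ideal of Lebesgue null subsets of `ℝⁿ`. -/
theorem stmt3 (n : ℕ) (r : ℝ) (hn : 1 ≤ n) (hr0 : 0 < r) (hrn : r < n)
    (B : Set (EuclideanSpace ℝ (Fin n))) (hB : MeasurableSet B)
    (hpos : 0 < μH[r] B) (hfin : μH[r] B < ⊤) :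
    ∃ S : Set (Set (EuclideanSpace ℝ (Fin n))),
      (∀ A ∈ S, μH[r] A = 0) ∧
      Cardinal.mk S ≤ covOf {A : Set (EuclideanSpace ℝ (Fin n)) | volume A = 0} ∧
      B ⊆ ⋃₀ S :=
  stmt3_general n r hn hr0 B hpos hfin
end
end

section
/- Let n be a positive integer and let r be a real number with 0 < r < n. Then add(I^r_{n,σ-fin}) = ℵ₁: the least cardinality of a family of subsets of ℝⁿ, each of σ-finite r-dimensional Hausdorff measure, whose union is not of σ-finite r-dimensional Hausdorff measure, equals ℵ₁. -/
open MeasureTheory Set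
open scoped ENNReal MeasureTheory

noncomputable section

/-- A set `H ⊆ ℝⁿ` is of σ-finite `r`-dimensional Hausdorff measure if it is a countable
union of sets each of finite `r`-dimensional Hausdorff measure. -/
def SigmaFiniteHausdorff (n : ℕ) (r : ℝ) (H : Set (EuclideanSpace ℝ (Fin n))) : Prop :=
  ∃ A : ℕ → Set (EuclideanSpace ℝ (Fin n)), H = ⋃ k, A k ∧ ∀ k, μH[r] (A k) < ⊤

/-- `addOf J` is the least cardinality of a subfamily of `J` whose union is not in `J`. -/
def addOf {α : Type*} (J : Set (Set α)) : Cardinal :=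
  sInf { c : Cardinal | ∃ S ⊆ J, ⋃₀ S ∉ J ∧ Cardinal.mk S = c }

/-!
A countable union of sets of σ-finite `r`-dimensional Hausdorff measure is again of σ-finite
measure, so `add ≥ ℵ₁`. Conversely, for `0 < r < n` and every `x : ℕ → Bool` we build a
Cantor-type compact set `K x = {∑ L ^ j • v_j}`, where at level `j` the point `v_j` runs over the
`Q ^ n` points of a grid lying in the half of a box (along the first axis) selected by `x j`,
and `Q ^ n * L ^ r = 1`. Covering by the `Q ^ (n j)` pieces of level `j` gives
`μH[r] (K x) < ∞`; reading addresses as base-`Q ^ n` expansions is an `r`-Hölder map of `K x`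
onto `[0, 1]`, which gives `0 < μH[r] (K x)`. The sets `K x` are pairwise disjoint, and a set
of finite measure meets only countably many disjoint sets of positive measure in positive
measure, so the union of `ℵ₁` of the `K x` is not of σ-finite measure.
-/

section CodingMap

variable {E : Type*} [NormedAddCommGroup E] [NormedSpace ℝ E] {L M : ℝ}

theorem summable_pow_smul_of_norm_le [CompleteSpace E] (hL0 : 0 ≤ L) (hL1 : L < 1)
    {c : ℕ → E} (hc : ∀ j, ‖c j‖ ≤ M) : Summable fun j => L ^ j • c j :=
  .of_norm_bounded ((summable_geometric_of_lt_one hL0 hL1).mul_left M) fun j => by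
    rw [norm_smul, Real.norm_of_nonneg (pow_nonneg hL0 j), mul_comm]
    exact mul_le_mul_of_nonneg_right (hc j) (pow_nonneg hL0 j)

theorem norm_tsum_pow_smul_le (hL0 : 0 ≤ L) (hL : L ≤ 1 / 2) {c : ℕ → E}
    (hc : ∀ j, ‖c j‖ ≤ M) : ‖∑' j, L ^ j • c j‖ ≤ 2 * M := by
  have hL1 : L < 1 := by linarith
  have hM : 0 ≤ M := (norm_nonneg _).trans (hc 0)
  calc ‖∑' j, L ^ j • c j‖ ≤ M * (1 - L)⁻¹ :=
        tsum_of_norm_bounded ((hasSum_geometric_of_lt_one hL0 hL1).mul_left M) fun j => by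
          rw [norm_smul, Real.norm_of_nonneg (pow_nonneg hL0 j), mul_comm]
          exact mul_le_mul_of_nonneg_right (hc j) (pow_nonneg hL0 j)
    _ ≤ M * 2 := by
        gcongr
        rw [inv_le_comm₀ (by linarith) two_pos]
        linarith
    _ = 2 * M := mul_comm _ _

variable {A : Type*} {f : A → E}

def codingMap (L : ℝ) (f : A → E) (a : ℕ → A) : E :=
  ∑' j, L ^ j • f (a j)

variable [CompleteSpace E]

theorem codingMap_sub_codingMap (hL0 : 0 ≤ L) (hL1 : L < 1) (hf : ∀ v, ‖f v‖ ≤ M)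
    {a b : ℕ → A} {t : ℕ} (hab : ∀ i < t, a i = b i) :
    codingMap L f a - codingMap L f b =
      L ^ t • ∑' j, L ^ j • (f (a (j + t)) - f (b (j + t))) := by
  have hs : ∀ a : ℕ → A, Summable fun j => L ^ j • f (a j) := fun a =>
    summable_pow_smul_of_norm_le hL0 hL1 fun j => hf (a j)
  have hsub : Summable fun j => L ^ j • (f (a j) - f (b j)) := by
    simpa only [smul_sub] using (hs a).sub (hs b)
  rw [codingMap, codingMap, ← (hs a).tsum_sub (hs b)]
  simp_rw [← smul_sub]
  rw [← hsub.sum_add_tsum_nat_add t,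
    Finset.sum_eq_zero fun i hi => by rw [hab i (Finset.mem_range.1 hi), sub_self, smul_zero],
    zero_add, ← tsum_const_smul'' (L ^ t)]
  simp only [smul_sub, smul_smul, pow_add, mul_comm]

theorem dist_codingMap_le (hL0 : 0 ≤ L) (hL : L ≤ 1 / 2) (hf : ∀ v, ‖f v‖ ≤ M)
    {a b : ℕ → A} {t : ℕ} (hab : ∀ i < t, a i = b i) :
    dist (codingMap L f a) (codingMap L f b) ≤ 4 * M * L ^ t := by
  rw [dist_eq_norm, codingMap_sub_codingMap hL0 (by linarith) hf hab, norm_smul,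
    Real.norm_of_nonneg (pow_nonneg hL0 t)]
  have := norm_tsum_pow_smul_le hL0 hL fun j => (norm_sub_le _ _).trans
    (add_le_add (hf (a (j + t))) (hf (b (j + t))))
  nlinarith [pow_nonneg hL0 t]

theorem le_dist_codingMap {δ : ℝ} (hL0 : 0 ≤ L) (hL : L ≤ 1 / 2) (hf : ∀ v, ‖f v‖ ≤ M)
    (hsep : ∀ v w, v ≠ w → δ ≤ ‖f v - f w‖) (hLδ : 8 * M * L ≤ δ)
    {a b : ℕ → A} {t : ℕ} (hab : ∀ i < t, a i = b i) (ht : a t ≠ b t) :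
    L ^ t * δ / 2 ≤ dist (codingMap L f a) (codingMap L f b) := by
  set d : ℕ → E := fun j => f (a (j + t)) - f (b (j + t))
  have hd : ∀ j, ‖d j‖ ≤ 2 * M := fun j => (norm_sub_le _ _).trans
    (by linarith [hf (a (j + t)), hf (b (j + t))])
  have hsplit : ∑' j, L ^ j • d j = d 0 + L • ∑' j, L ^ j • d (j + 1) := by
    rw [(summable_pow_smul_of_norm_le hL0 (by linarith) hd).tsum_eq_zero_add, ← tsum_const_smul'']
    simp only [pow_zero, one_smul, smul_smul, pow_succ, mul_comm]
  have htail := norm_tsum_pow_smul_le hL0 hL fun j => hd (j + 1)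
  have hhead : δ ≤ ‖d 0‖ := hsep _ _ (by simpa using ht)
  have hlow : δ / 2 ≤ ‖∑' j, L ^ j • d j‖ := by
    rw [hsplit]
    calc δ / 2 ≤ ‖d 0‖ - L * (2 * (2 * M)) := by nlinarith
      _ ≤ ‖d 0‖ - ‖L • ∑' j, L ^ j • d (j + 1)‖ := by
          rw [norm_smul, Real.norm_of_nonneg hL0]
          exact sub_le_sub_left (mul_le_mul_of_nonneg_left htail hL0) _
      _ ≤ _ := norm_sub_le_norm_add _ _
  rw [dist_eq_norm, codingMap_sub_codingMap hL0 (by linarith) hf hab, norm_smul,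
    Real.norm_of_nonneg (pow_nonneg hL0 t), mul_div_assoc]
  exact mul_le_mul_of_nonneg_left hlow (pow_nonneg hL0 t)

theorem codingMap_injective {δ : ℝ} (hL0 : 0 < L) (hL : L ≤ 1 / 2) (hf : ∀ v, ‖f v‖ ≤ M)
    (hsep : ∀ v w, v ≠ w → δ ≤ ‖f v - f w‖) (hδ : 0 < δ) (hLδ : 8 * M * L ≤ δ) :
    Function.Injective (codingMap L f) := by
  intro a b hab
  by_contra hne
  have := le_dist_codingMap hL0.le hL hf hsep hLδ (fun i hi => PiNat.apply_eq_of_lt_firstDiff hi)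
    (PiNat.apply_firstDiff_ne hne)
  rw [hab, dist_self] at this
  have : 0 < L ^ PiNat.firstDiff a b * δ / 2 := by positivity
  linarith

theorem continuous_codingMap [TopologicalSpace A] [DiscreteTopology A] (hL0 : 0 ≤ L)
    (hL1 : L < 1) (hf : ∀ v, ‖f v‖ ≤ M) : Continuous (codingMap L f) :=
  continuous_tsum (fun j => continuous_const.smul
      ((continuous_of_discreteTopology (f := f)).comp (continuous_apply j)))
    ((summable_geometric_of_lt_one hL0 hL1).mul_right M) fun j a => by
    rw [norm_smul, Real.norm_of_nonneg (pow_nonneg hL0 j)]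
    exact mul_le_mul_of_nonneg_left (hf (a j)) (pow_nonneg hL0 j)

end CodingMap

theorem hausdorffMeasure_range_le_of_dist_le_rpow {α X Y : Type*} [Nonempty α]
    [MetricSpace X] [MeasurableSpace X] [BorelSpace X]
    [MetricSpace Y] [MeasurableSpace Y] [BorelSpace Y] (f : α → X) (g : α → Y) {C r : ℝ}
    (hC : 0 ≤ C) (hr : 0 < r) (h : ∀ a b, dist (g a) (g b) ≤ C * dist (f a) (f b) ^ r)
    {d : ℝ} (hd : 0 ≤ d) :
    μH[d] (range g) ≤ ENNReal.ofReal C ^ d * μH[r * d] (range f) := by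
  have hfac : ∀ a, g (Function.invFun f (f a)) = g a := fun a => by
    have := h (Function.invFun f (f a)) a
    rwa [Function.invFun_eq (f := f) ⟨a, rfl⟩, dist_self, Real.zero_rpow hr.ne', mul_zero,
      dist_le_zero] at this
  have hrange : range g = (g ∘ Function.invFun f) '' range f := by
    rw [← range_comp, Function.comp_assoc]
    exact congrArg range (funext fun a => (hfac a).symm)
  have hHolder : HolderOnWith C.toNNReal r.toNNReal (g ∘ Function.invFun f) (range f) := by
    rintro _ ⟨a, rfl⟩ _ ⟨b, rfl⟩
    rw [Function.comp_apply, Function.comp_apply, hfac, hfac, edist_dist, edist_dist,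
      Real.coe_toNNReal r hr.le, ENNReal.ofReal_rpow_of_nonneg dist_nonneg hr.le,
      ← ENNReal.ofReal.eq_def, ← ENNReal.ofReal_mul hC]
    exact ENNReal.ofReal_le_ofReal (h a b)
  rw [hrange, ← Real.coe_toNNReal r hr.le]
  exact hHolder.hausdorffMeasure_image_le (Real.toNNReal_pos.2 hr) hd

section ShiftSpaceImage

open Filter Topology

variable {X : Type*} [MetricSpace X] [MeasurableSpace X] [BorelSpace X] {P : Type*} [Fintype P]
  {Ψ : (ℕ → P) → X} {L c r : ℝ}

theorem hausdorffMeasure_range_le_of_dist_le_pow (hr : 0 ≤ r) (hL0 : 0 ≤ L) (hL1 : L < 1)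
    (hN : Fintype.card P * L ^ r = 1) (hc : 0 ≤ c)
    (hΨ : ∀ p q t, (∀ i < t, p i = q i) → dist (Ψ p) (Ψ q) ≤ c * L ^ t) :
    μH[r] (range Ψ) ≤ ENNReal.ofReal (c ^ r) := by
  let piece (j : ℕ) (s : Fin j → P) : Set X := Ψ '' {p | ∀ i : Fin j, p i = s i}
  have hdiam : ∀ j s, Metric.ediam (piece j s) ≤ ENNReal.ofReal (c * L ^ j) := by
    refine fun j s => Metric.ediam_le ?_
    rintro - ⟨p, hp, rfl⟩ - ⟨q, hq, rfl⟩
    rw [edist_dist]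
    exact ENNReal.ofReal_le_ofReal
      (hΨ p q j fun i hi => (hp ⟨i, hi⟩).trans (hq ⟨i, hi⟩).symm)
  have hcover : ∀ j, range Ψ ⊆ ⋃ s, piece j s := by
    rintro j _ ⟨p, rfl⟩
    exact mem_iUnion.2 ⟨fun i => p i, p, fun i => rfl, rfl⟩
  have hlim : Tendsto (fun j : ℕ => ENNReal.ofReal (c * L ^ j)) atTop (𝓝 0) := by
    rw [← ENNReal.ofReal_zero, ← mul_zero c]
    exact ENNReal.tendsto_ofReal
      ((tendsto_pow_atTop_nhds_zero_of_lt_one hL0 hL1).const_mul c)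
  have hsum : ∀ j, ∑ s, Metric.ediam (piece j s) ^ r ≤ ENNReal.ofReal (c ^ r) := fun j =>
    calc ∑ s, Metric.ediam (piece j s) ^ r
        ≤ ∑ _s : Fin j → P, ENNReal.ofReal ((c * L ^ j) ^ r) :=
          Finset.sum_le_sum fun s _ => by
            rw [← ENNReal.ofReal_rpow_of_nonneg (by positivity) hr]
            exact ENNReal.rpow_le_rpow (hdiam j s) hr
      _ = ENNReal.ofReal (c ^ r * (Fintype.card P * L ^ r) ^ j) := by
          rw [Finset.sum_const, nsmul_eq_mul, Finset.card_univ, Fintype.card_fun,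
            Fintype.card_fin, ← ENNReal.ofReal_natCast, ← ENNReal.ofReal_mul (by positivity),
            Real.mul_rpow hc (pow_nonneg hL0 j), ← Real.rpow_pow_comm hL0]
          push_cast
          ring_nf
      _ = ENNReal.ofReal (c ^ r) := by rw [hN, one_pow, mul_one]
  exact (Measure.hausdorffMeasure_le_liminf_sum r _ _ hlim piece (.of_forall hdiam)
    (.of_forall hcover)).trans ((liminf_le_liminf (.of_forall hsum)).trans_eq (liminf_const _))

theorem hausdorffMeasure_range_pos_of_le_dist (hr : 0 < r) (hP : 1 < Fintype.card P)
    (hL0 : 0 < L) (hN : Fintype.card P * L ^ r = 1) (hc : 0 < c)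
    (hΨ : ∀ p q t, (∀ i < t, p i = q i) → p t ≠ q t → c * L ^ t ≤ dist (Ψ p) (Ψ q)) :
    0 < μH[r] (range Ψ) := by
  have : Nonempty P := Fintype.card_pos_iff.1 (by omega)
  let e := Fintype.equivFin P
  -- `g` reads an address as a base-`card P` expansion: it is `r`-Hölder along `Ψ` and onto `[0, 1]`
  let g : (ℕ → P) → ℝ := fun p => Real.ofDigits fun j => e (p j)
  have hg : ∀ p q, dist (g p) (g q) ≤ c⁻¹ ^ r * dist (Ψ p) (Ψ q) ^ r := by
    intro p q
    rcases eq_or_ne p q with rfl | hpq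
    · rw [dist_self]; positivity
    set t := PiNat.firstDiff p q
    calc dist (g p) (g q) ≤ ((Fintype.card P : ℝ) ^ t)⁻¹ :=
          Real.abs_ofDigits_sub_ofDigits_le fun i hi => by
            rw [PiNat.apply_eq_of_lt_firstDiff hi]
      _ = (L ^ t) ^ r := by
          rw [← Real.rpow_pow_comm hL0.le, eq_inv_of_mul_eq_one_right hN, inv_pow]
      _ ≤ (c⁻¹ * dist (Ψ p) (Ψ q)) ^ r := by
          gcongr
          rw [le_inv_mul_iff₀ hc]
          exact hΨ p q t (fun i hi => PiNat.apply_eq_of_lt_firstDiff hi)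
            (PiNat.apply_firstDiff_ne hpq)
      _ = c⁻¹ ^ r * dist (Ψ p) (Ψ q) ^ r := Real.mul_rpow (by positivity) dist_nonneg
  have hIcc : Icc (0 : ℝ) 1 ⊆ range g := by
    intro y hy
    obtain ⟨d, -, rfl⟩ := Real.ofDigits_SurjOn hP hy
    exact ⟨fun j => e.symm (d j), by simp [g]⟩
  have hle := hausdorffMeasure_range_le_of_dist_le_rpow Ψ g (by positivity) hr hg zero_le_one
  rw [mul_one, ENNReal.rpow_one] at hle
  have hone : (1 : ℝ≥0∞) ≤ ENNReal.ofReal (c⁻¹ ^ r) * μH[r] (range Ψ) := by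
    calc (1 : ℝ≥0∞) = μH[1] (Icc (0 : ℝ) 1) := by
          rw [hausdorffMeasure_real, Real.volume_Icc, sub_zero, ENNReal.ofReal_one]
      _ ≤ _ := (measure_mono hIcc).trans hle
  refine pos_iff_ne_zero.2 fun h0 => ?_
  simp [h0] at hone

end ShiftSpaceImage

theorem EuclideanSpace.norm_le_sqrt_card_mul {ι : Type*} [Fintype ι] {x : EuclideanSpace ℝ ι}
    {c : ℝ} (hc : 0 ≤ c) (hx : ∀ i, |x i| ≤ c) : ‖x‖ ≤ √(Fintype.card ι) * c := by
  rw [EuclideanSpace.norm_eq, ← Real.sqrt_sq hc, ← Real.sqrt_mul (Nat.cast_nonneg _)]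
  refine Real.sqrt_le_sqrt ?_
  calc ∑ i, ‖x i‖ ^ 2 ≤ ∑ _i : ι, c ^ 2 := Finset.sum_le_sum fun i _ => by
        rw [Real.norm_eq_abs]
        exact pow_le_pow_left₀ (abs_nonneg _) (hx i) 2
    _ = Fintype.card ι * c ^ 2 := by
        rw [Finset.sum_const, Finset.card_univ, nsmul_eq_mul]

section Grid

variable {n Q : ℕ}

/-- A point of the integer grid `[0, 2Q) × [0, Q) × ⋯ × [0, Q)` (axis `i₀` first): the flag `b`
selects the half `[0, Q)` or `[Q, 2Q)` along the axis `i₀`. -/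
def gridIndex (Q : ℕ) (i₀ : Fin n) (v : Bool × (Fin n → Fin Q)) (i : Fin n) : ℕ :=
  v.2 i + if v.1 ∧ i = i₀ then Q else 0

theorem gridIndex_injective (i₀ : Fin n) : Function.Injective (gridIndex Q i₀) := by
  rintro ⟨b, p⟩ ⟨b', p'⟩ h
  have hb : b = b' := by
    have h₀ := congrFun h i₀
    have := (p i₀).isLt
    have := (p' i₀).isLt
    cases b <;> cases b' <;> simp [gridIndex] at h₀ ⊢ <;> omega
  subst hb
  refine Prod.ext rfl (funext fun i => Fin.ext ?_)
  simpa [gridIndex] using congrFun h i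

def gridPoint (Q : ℕ) (i₀ : Fin n) (v : Bool × (Fin n → Fin Q)) : EuclideanSpace ℝ (Fin n) :=
  WithLp.toLp 2 fun i => (gridIndex Q i₀ v i : ℝ)

theorem norm_gridPoint_le (i₀ : Fin n) (v : Bool × (Fin n → Fin Q)) :
    ‖gridPoint Q i₀ v‖ ≤ √n * (2 * Q) := by
  have := EuclideanSpace.norm_le_sqrt_card_mul (x := gridPoint Q i₀ v) (c := 2 * (Q : ℝ))
    (by positivity) fun i => by
      have hle : gridIndex Q i₀ v i ≤ 2 * Q := by
        have := (v.2 i).isLt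
        unfold gridIndex
        split <;> omega
      rw [gridPoint, PiLp.toLp_apply, abs_of_nonneg (Nat.cast_nonneg _)]
      exact (Nat.cast_le.2 hle).trans_eq (by push_cast; ring)
  rwa [Fintype.card_fin] at this

theorem one_le_norm_gridPoint_sub (i₀ : Fin n) {v w : Bool × (Fin n → Fin Q)} (hvw : v ≠ w) :
    1 ≤ ‖gridPoint Q i₀ v - gridPoint Q i₀ w‖ := by
  obtain ⟨i, hi⟩ := Function.ne_iff.1 ((gridIndex_injective i₀).ne hvw)
  refine le_trans ?_ (PiLp.norm_apply_le _ i)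
  simp only [gridPoint, PiLp.sub_apply, Real.norm_eq_abs]
  exact_mod_cast Int.one_le_abs (sub_ne_zero.2 (Nat.cast_injective.ne hi))

end Grid

open Filter in
theorem exists_nat_mul_mul_rpow_neg_le (c : ℝ) {s : ℝ} (hs : 1 < s) :
    ∃ Q : ℕ, 2 ≤ Q ∧ c * Q * (Q : ℝ) ^ (-s) ≤ 1 := by
  have hlim := (tendsto_rpow_atTop (by linarith : 0 < s - 1)).comp tendsto_natCast_atTop_atTop
  obtain ⟨Q, hQc, hQ2⟩ := ((hlim.eventually_ge_atTop c).and (eventually_ge_atTop 2)).exists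
  have hQ : (0 : ℝ) < Q := by positivity
  refine ⟨Q, hQ2, ?_⟩
  calc c * Q * (Q : ℝ) ^ (-s) = c * ((Q : ℝ) ^ (s - 1))⁻¹ := by
        rw [mul_assoc, ← Real.rpow_neg hQ.le, neg_sub, Real.rpow_sub hQ, Real.rpow_one,
          Real.rpow_neg hQ.le, div_eq_mul_inv]
    _ ≤ 1 := by
        rw [mul_inv_le_iff₀ (by positivity), one_mul]
        exact hQc

theorem exists_pairwise_disjoint_compact_hausdorffMeasure_pos_lt_top {n : ℕ} {r : ℝ}
    (hn : 0 < n) (hr0 : 0 < r) (hrn : r < n) :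
    ∃ K : (ℕ → Bool) → Set (EuclideanSpace ℝ (Fin n)), (∀ x, IsCompact (K x)) ∧
      (∀ x, 0 < μH[r] (K x)) ∧ (∀ x, μH[r] (K x) < ∞) ∧ Pairwise (Function.onFun Disjoint K) := by
  obtain ⟨Q, hQ2, hQ⟩ := exists_nat_mul_mul_rpow_neg_le (16 * √n) (s := n / r)
    ((one_lt_div hr0).2 hrn)
  set L := (Q : ℝ) ^ (-(n / r))
  set f := gridPoint Q (⟨0, hn⟩ : Fin n)
  set M := √n * (2 * Q)
  have hL0 : 0 < L := by positivity
  have hLδ : 8 * M * L ≤ 1 := by linarith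
  have hL : L ≤ 1 / 2 := by
    have h1 : 1 ≤ √(n : ℝ) := Real.one_le_sqrt.2 (by exact_mod_cast hn)
    have h2 : (2 : ℝ) ≤ Q := by exact_mod_cast hQ2
    nlinarith [mul_le_mul h1 h2 zero_le_two (Real.sqrt_nonneg _)]
  have hN : (Fintype.card (Fin n → Fin Q) : ℝ) * L ^ r = 1 := by
    rw [← Real.rpow_mul (by positivity), neg_mul, div_mul_cancel₀ _ hr0.ne', Real.rpow_neg
      (by positivity), Real.rpow_natCast, Fintype.card_fun, Fintype.card_fin, Fintype.card_fin,
      Nat.cast_pow, mul_inv_cancel₀ (by positivity)]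
  have hf : ∀ v, ‖f v‖ ≤ M := norm_gridPoint_le _
  have hsep : ∀ v w, v ≠ w → 1 ≤ ‖f v - f w‖ := fun _ _ => one_le_norm_gridPoint_sub _
  let Ψ (x : ℕ → Bool) (p : ℕ → Fin n → Fin Q) := codingMap L f fun j => (x j, p j)
  refine ⟨fun x => range (Ψ x), fun x => ?_, fun x => ?_, fun x => ?_, fun x y hxy => ?_⟩
  · exact isCompact_range ((continuous_codingMap hL0.le (by linarith) hf).comp
      (continuous_pi fun j => continuous_const.prodMk (continuous_apply j)))
  · refine hausdorffMeasure_range_pos_of_le_dist hr0 ?_ hL0 hN one_half_pos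
      fun p q t hpq ht => ?_
    · rw [Fintype.card_fun, Fintype.card_fin, Fintype.card_fin]
      exact Nat.one_lt_pow hn.ne' hQ2
    · have := le_dist_codingMap hL0.le hL hf hsep hLδ (a := fun j => (x j, p j))
        (b := fun j => (x j, q j)) (fun i hi => by rw [hpq i hi]) (by simpa using ht)
      linarith
  · exact (hausdorffMeasure_range_le_of_dist_le_pow hr0.le hL0.le (by linarith) hN
      (by positivity) fun p q t hpq => dist_codingMap_le hL0.le hL hf
        fun i hi => by rw [hpq i hi]).trans_lt ENNReal.ofReal_lt_top
  · refine Set.disjoint_left.2 ?_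
    rintro _ ⟨p, rfl⟩ ⟨q, hq⟩
    exact hxy (funext fun j => congrArg (fun a => (a j).1)
      (codingMap_injective hL0 hL hf hsep one_pos hLδ hq).symm)

theorem MeasureTheory.Measure.countable_of_pairwise_disjoint_of_subset_iUnion
    {α ι : Type*} [MeasurableSpace α] (μ : Measure α) {K : ι → Set α}
    (hK : ∀ i, MeasurableSet (K i)) (hdisj : Pairwise (Function.onFun Disjoint K))
    (hpos : ∀ i, 0 < μ (K i)) {A : ℕ → Set α} (hA : ∀ k, μ (A k) < ∞)
    (hcov : ∀ i, K i ⊆ ⋃ k, A k) : Countable ι := by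
  have hcount : ∀ k, {i | 0 < μ.restrict (A k) (K i)}.Countable := fun k =>
    Measure.countable_meas_pos_of_disjoint_of_meas_iUnion_ne_top _ hK hdisj
      ((measure_mono (subset_univ _)).trans_lt (by rw [Measure.restrict_apply_univ]; exact hA k)).ne
  have hall : ⋃ k, {i | 0 < μ.restrict (A k) (K i)} = univ := by
    refine eq_univ_of_forall fun i => ?_
    by_contra hi
    simp only [mem_iUnion, mem_ofPred_eq, not_exists, not_lt, nonpos_iff_eq_zero,
      Measure.restrict_apply (hK i)] at hi
    have hsub : K i ⊆ ⋃ k, K i ∩ A k := fun z hz => by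
      obtain ⟨k, hk⟩ := mem_iUnion.1 (hcov i hz)
      exact mem_iUnion.2 ⟨k, hz, hk⟩
    exact (hpos i).ne' (measure_mono_null hsub (measure_iUnion_null hi))
  exact countable_univ_iff.1 (hall ▸ countable_iUnion hcount)

section SigmaFinite

variable {n : ℕ} {r : ℝ}

theorem sigmaFiniteHausdorff_iff_exists_countable {H : Set (EuclideanSpace ℝ (Fin n))} :
    SigmaFiniteHausdorff n r H ↔
      ∃ T : Set (Set (EuclideanSpace ℝ (Fin n))), T.Countable ∧ (∀ t ∈ T, μH[r] t < ∞) ∧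
        ⋃₀ T = H := by
  constructor
  · rintro ⟨A, hH, hA⟩
    exact ⟨range A, countable_range A, forall_mem_range.2 hA, by rw [sUnion_range, hH]⟩
  · rintro ⟨T, hT, hfin, rfl⟩
    -- `∅` is added so that the family is nonempty and can be enumerated by `ℕ`
    obtain ⟨A, hA⟩ := (hT.insert ∅).exists_eq_range (insert_nonempty _ _)
    refine ⟨A, by rw [← sUnion_range, ← hA, sUnion_insert, empty_union], fun k => ?_⟩
    rcases (hA ▸ mem_range_self k : A k ∈ insert ∅ T) with h | h
    · rw [h, measure_empty]; exact ENNReal.zero_lt_top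
    · exact hfin _ h

theorem SigmaFiniteHausdorff.sUnion {S : Set (Set (EuclideanSpace ℝ (Fin n)))}
    (hS : S.Countable) (h : ∀ s ∈ S, SigmaFiniteHausdorff n r s) :
    SigmaFiniteHausdorff n r (⋃₀ S) := by
  choose! T hTc hTfin hTU using fun s hs => sigmaFiniteHausdorff_iff_exists_countable.1 (h s hs)
  refine sigmaFiniteHausdorff_iff_exists_countable.2 ⟨⋃ s ∈ S, T s, hS.biUnion hTc, ?_, ?_⟩
  · simp only [mem_iUnion₂]
    rintro t ⟨s, hs, ht⟩
    exact hTfin s hs t ht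
  · simp_rw [sUnion_iUnion]
    rw [sUnion_eq_biUnion]
    exact iUnion₂_congr hTU

end SigmaFinite

theorem addOf_eq_aleph_one {α : Type*} {J : Set (Set α)}
    (hJ : ∀ S ⊆ J, S.Countable → ⋃₀ S ∈ J) {S : Set (Set α)} (hSJ : S ⊆ J) (hSU : ⋃₀ S ∉ J)
    (hS : Cardinal.mk S = Cardinal.aleph 1) : addOf J = Cardinal.aleph 1 :=
  le_antisymm (csInf_le' ⟨S, hSJ, hSU, hS⟩) <| le_csInf ⟨_, S, hSJ, hSU, hS⟩
    fun _ ⟨S', hS'J, hS'U, hc⟩ => hc ▸ not_lt.1 fun h =>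
      hS'U (hJ S' hS'J (Cardinal.le_aleph0_iff_set_countable.1 (Cardinal.lt_aleph_one_iff.1 h)))

theorem exists_sigmaFiniteHausdorff_family_card_aleph_one {n : ℕ} {r : ℝ} (hn : 0 < n)
    (hr0 : 0 < r) (hrn : r < n) :
    ∃ S ⊆ {H | SigmaFiniteHausdorff n r H}, ⋃₀ S ∉ {H | SigmaFiniteHausdorff n r H} ∧
      Cardinal.mk S = Cardinal.aleph 1 := by
  obtain ⟨K, hKc, hKpos, hKfin, hKdisj⟩ :=
    exists_pairwise_disjoint_compact_hausdorffMeasure_pos_lt_top hn hr0 hrn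
  obtain ⟨T, hT⟩ := Cardinal.le_mk_iff_exists_set.1 (Cardinal.aleph_one_le_continuum.trans_eq
    (by simp : Cardinal.continuum = Cardinal.mk (ℕ → Bool)))
  have hKinj : InjOn K T := fun x _ y _ hxy => by
    by_contra hne
    have hempty := hKdisj hne
    rw [Function.onFun, ← hxy, disjoint_self] at hempty
    exact (hKpos x).ne' (by rw [hempty]; exact measure_empty)
  refine ⟨K '' T, ?_, ?_, by rw [Cardinal.mk_image_eq_of_injOn K T hKinj, hT]⟩
  · rintro _ ⟨x, -, rfl⟩
    exact ⟨fun _ => K x, (iUnion_const _).symm, fun _ => hKfin x⟩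
  · rintro ⟨A, hA, hAfin⟩
    have hT : ¬ T.Countable := by
      rw [← Cardinal.le_aleph0_iff_set_countable, hT]
      exact Cardinal.aleph0_lt_aleph_one.not_ge
    refine hT (countable_coe_iff.1 (μH[r].countable_of_pairwise_disjoint_of_subset_iUnion
      (K := fun x : T => K x) (fun x => (hKc x).measurableSet)
      (fun x y h => hKdisj (Subtype.coe_injective.ne h)) (fun x => hKpos x) hAfin fun x => ?_))
    exact hA ▸ subset_sUnion_of_mem (mem_image_of_mem K x.2)

/-- `add(I^r_{n,σ-fin}) = ℵ₁`. -/
theorem stmt5 (n : ℕ) (r : ℝ) (hn : 1 ≤ n) (hr0 : 0 < r) (hrn : r < n) :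
    addOf {H : Set (EuclideanSpace ℝ (Fin n)) | SigmaFiniteHausdorff n r H} =
      Cardinal.aleph 1 := by
  obtain ⟨S, hSJ, hSU, hS⟩ := exists_sigmaFiniteHausdorff_family_card_aleph_one hn hr0 hrn
  exact addOf_eq_aleph_one (fun S hSJ hS => SigmaFiniteHausdorff.sUnion hS hSJ) hSJ hSU hS
end
end

section
/- Let n be a positive integer and let r be a real number with 0 < r < n. Then non(I^r_{n,σ-fin}) = non(N^r_n): the least cardinality of a subset of ℝⁿ that is not of σ-finite r-dimensional Hausdorff measure equals the least cardinality of a subset of ℝⁿ that is not H^r-null. -/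
open MeasureTheory Set
open scoped ENNReal MeasureTheory

noncomputable section


/-- `nonOf J` is the least cardinality of a set that does not belong to `J`. -/
def nonOf {α : Type*} (J : Set (Set α)) : Cardinal :=
  sInf { c : Cardinal | ∃ H : Set α, H ∉ J ∧ Cardinal.mk H = c }

/-!
If `μH[r] H ≠ 0`, either `H` itself is not σ-finite or some piece `A ⊆ H` has
`0 < μH[r] A < ∞`. Normalising `μH[r]` on `A`, moving it to `ℝ` by a Borel embedding and composing
with the distribution function (continuous, since `μH[r]` has no atoms) pushes it forward to
Lebesgue measure on `[0, 1]`, so the image `S` of `A` is a Lebesgue non-null subset of `ℝ` with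
`#S ≤ #H`. Then `Sⁿ ⊆ ℝⁿ` is Lebesgue non-null, has cardinality `#S`, and cannot be σ-finite for
`μH[r]`: for `r < n` a set of finite `μH[r]` measure is `μH[n]`-null, hence Lebesgue-null.
The reverse inequality holds because `μH[r]`-null sets are σ-finite.
-/

open ProbabilityTheory
open scoped Cardinal

namespace ProbabilityTheory

variable (ν : Measure ℝ) [IsProbabilityMeasure ν] [NullSingletonClass ν]

theorem continuous_cdf_s6 : Continuous (cdf ν) := by
  refine continuous_iff_continuousAt.2 fun x => ?_
  rw [(cdf ν).mono.continuousAt_iff_leftLim_eq_rightLim, StieltjesFunction.rightLim_eq]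
  -- the jump of `cdf ν` at `x` is `ν {x} = 0`
  have h := (cdf ν).measure_singleton x
  rw [measure_cdf, measure_singleton, eq_comm, ENNReal.ofReal_eq_zero, sub_nonpos] at h
  exact le_antisymm ((cdf ν).mono.leftLim_le le_rfl) h

theorem measure_cdf_preimage_Iic {y : ℝ} (hy0 : 0 ≤ y) (hy1 : y < 1) :
    ν (cdf ν ⁻¹' Iic y) = ENNReal.ofReal y := by
  set E := cdf ν ⁻¹' Iic y
  obtain ⟨b, hb⟩ := ((tendsto_cdf_atTop ν).eventually (lt_mem_nhds hy1)).exists_forall_of_atTop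
  refine le_antisymm ?_ ?_
  · rcases E.eq_empty_or_nonempty with hE | hE
    · simp [hE]
    have hbdd : BddAbove E := ⟨b, fun x hx => not_lt.1 fun hbx => (hb x hbx.le).not_ge hx⟩
    have hu : sSup E ∈ E := (isClosed_le (continuous_cdf_s6 ν) continuous_const).csSup_mem hE hbdd
    calc ν E ≤ ν (Iic (sSup E)) := measure_mono fun x hx => le_csSup hbdd hx
      _ = ENNReal.ofReal (cdf ν (sSup E)) := (ofReal_cdf ν _).symm
      _ ≤ ENNReal.ofReal y := ENNReal.ofReal_le_ofReal hu
  · rcases hy0.eq_or_lt with rfl | hy0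
    · simp
    obtain ⟨a, ha⟩ := ((tendsto_cdf_atBot ν).eventually (gt_mem_nhds hy0)).exists
    obtain ⟨x, hx⟩ := intermediate_value_univ a b (continuous_cdf_s6 ν) ⟨ha.le, (hb b le_rfl).le⟩
    calc ENNReal.ofReal y = ν (Iic x) := by rw [← ofReal_cdf, hx]
      _ ≤ ν E := measure_mono fun z hz => ((cdf ν).mono hz).trans hx.le

theorem map_cdf_eq_volume_restrict : ν.map (cdf ν) = volume.restrict (Icc 0 1) := by
  refine Measure.ext_of_Iic _ _ fun y => ?_
  rw [Measure.map_apply (cdf ν).mono.measurable measurableSet_Iic,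
    Measure.restrict_apply measurableSet_Iic]
  rcases lt_or_ge y 0 with hy0 | hy0
  · have hE : cdf ν ⁻¹' Iic y = ∅ :=
      eq_empty_of_forall_notMem fun x hx => (hy0.trans_le (cdf_nonneg ν x)).not_ge hx
    have hI : Iic y ∩ Icc 0 1 = ∅ := by ext; simp only [mem_inter_iff, mem_Iic, mem_Icc]; grind
    simp [hE, hI]
  rcases lt_or_ge y 1 with hy1 | hy1
  · have hI : Iic y ∩ Icc 0 1 = Icc 0 y := by
      ext; simp only [mem_inter_iff, mem_Iic, mem_Icc]; grind
    rw [measure_cdf_preimage_Iic ν hy0 hy1, hI, Real.volume_Icc, sub_zero]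
  · have hE : cdf ν ⁻¹' Iic y = univ := eq_univ_of_forall fun x => (cdf_le_one ν x).trans hy1
    have hI : Iic y ∩ Icc 0 1 = Icc 0 1 := inter_eq_right.2 fun x hx => hx.2.trans hy1
    simp [hE, hI]

end ProbabilityTheory

theorem exists_volume_image_ne_zero {X : Type*} [MeasurableSpace X] [StandardBorelSpace X]
    (μ : Measure X) [NullSingletonClass μ] {A : Set X} (h0 : μ A ≠ 0) (htop : μ A ≠ ∞) :
    ∃ f : X → ℝ, volume (f '' A) ≠ 0 := by
  set B := toMeasurable μ A
  have hAB : μ[|B] A = 1 := by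
    rw [cond_apply (measurableSet_toMeasurable μ A), inter_eq_right.2 (subset_toMeasurable μ A),
      measure_toMeasurable, ENNReal.inv_mul_cancel h0 htop]
  have : IsProbabilityMeasure μ[|B] := by
    apply cond_isProbabilityMeasure_of_finite <;> rwa [measure_toMeasurable]
  obtain ⟨g, hg⟩ := exists_measurableEmbedding_real X
  set ν := μ[|B].map g
  have : IsProbabilityMeasure ν := Measure.isProbabilityMeasure_map hg.measurable.aemeasurable
  have : NullSingletonClass ν := ⟨fun x => by
    rw [Measure.map_apply hg.measurable (measurableSet_singleton x)]
    exact cond_absolutelyContinuous ((subsingleton_singleton.preimage hg.injective).measure_zero μ)⟩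
  have hf : Measurable (cdf ν ∘ g) := (cdf ν).mono.measurable.comp hg.measurable
  have hac : μ[|B].map (cdf ν ∘ g) ≪ volume := by
    rw [← Measure.map_map (cdf ν).mono.measurable hg.measurable, map_cdf_eq_volume_restrict]
    exact Measure.absolutelyContinuous_of_le Measure.restrict_le_self
  refine ⟨cdf ν ∘ g, fun hnull => ?_⟩
  have hA : μ[|B] A = 0 := measure_mono_null (subset_preimage_image _ _)
    (nonpos_iff_eq_zero.1 <| (Measure.le_map_apply hf.aemeasurable _).trans_eq (hac hnull))
  exact one_ne_zero (hAB.symm.trans hA)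

namespace EuclideanSpace

theorem volume_setOf_forall_mem {ι : Type*} [Fintype ι] (S : Set ℝ) :
    volume {x : EuclideanSpace ℝ ι | ∀ i, x i ∈ S} = volume S ^ Fintype.card ι := by
  calc volume {x : EuclideanSpace ℝ ι | ∀ i, x i ∈ S} = volume (univ.pi fun _ : ι => S) := by
        rw [← (volume_preserving_symm_measurableEquiv_toLp ι).measure_preimage_equiv]
        congr 1
        ext
        simp
    _ = volume S ^ Fintype.card ι := by
        rw [volume_pi, Measure.pi_pi, Finset.prod_const, Finset.card_univ]

theorem mk_setOf_forall_mem_le {S : Set ℝ} (hS : ℵ₀ ≤ #S) (n : ℕ) :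
    #{x : EuclideanSpace ℝ (Fin n) | ∀ i, x i ∈ S} ≤ #S :=
  calc #{x : EuclideanSpace ℝ (Fin n) | ∀ i, x i ∈ S} ≤ #(Fin n → S) :=
        Cardinal.mk_le_of_injective (f := fun x i => ⟨x.1 i, x.2 i⟩) fun x y hxy =>
          Subtype.ext (PiLp.ext fun i => congrArg Subtype.val (congrFun hxy i))
    _ = #S ^ n := by rw [← Cardinal.power_def, Cardinal.mk_fin, Cardinal.power_natCast]
    _ ≤ #S := Cardinal.power_nat_le hS

end EuclideanSpace

section

variable {n : ℕ} {r : ℝ}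

theorem sigmaFiniteHausdorff_of_null {H : Set (EuclideanSpace ℝ (Fin n))} (h : μH[r] H = 0) :
    SigmaFiniteHausdorff n r H :=
  ⟨fun _ => H, (iUnion_const H).symm, fun _ => h ▸ ENNReal.zero_lt_top⟩

theorem SigmaFiniteHausdorff.volume_eq_zero (hrn : r < n) {H : Set (EuclideanSpace ℝ (Fin n))}
    (h : SigmaFiniteHausdorff n r H) : volume H = 0 := by
  obtain ⟨A, rfl, hA⟩ := h
  refine measure_iUnion_null fun k =>
    Measure.absolutelyContinuous_isAddHaarMeasure volume μH[(n : ℝ)] ?_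
  exact (Measure.hausdorffMeasure_zero_or_top hrn (A k)).resolve_right (hA k).ne

theorem not_sigmaFiniteHausdorff_univ (hrn : r < n) : ¬ SigmaFiniteHausdorff n r univ :=
  fun h => isOpen_univ.measure_ne_zero volume univ_nonempty (h.volume_eq_zero hrn)

theorem exists_not_sigmaFiniteHausdorff_mk_le (hr0 : 0 < r) (hrn : r < n)
    {H : Set (EuclideanSpace ℝ (Fin n))} (hH : μH[r] H ≠ 0) :
    ∃ T, ¬ SigmaFiniteHausdorff n r T ∧ #T ≤ #H := by
  by_cases hsf : SigmaFiniteHausdorff n r H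
  swap
  · exact ⟨H, hsf, le_rfl⟩
  obtain ⟨A, hHA, hA⟩ := hsf
  obtain ⟨k, hk⟩ : ∃ k, μH[r] (A k) ≠ 0 := by
    by_contra! h
    exact hH (hHA ▸ measure_iUnion_null h)
  have := Measure.nullSingletonClass_hausdorff (EuclideanSpace ℝ (Fin n)) hr0
  obtain ⟨f, hS⟩ := exists_volume_image_ne_zero μH[r] hk (hA k).ne
  set S := f '' A k
  have hS_inf : ℵ₀ ≤ #S :=
    not_lt.1 fun h => hS ((Cardinal.le_aleph0_iff_set_countable.1 h.le).measure_zero volume)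
  refine ⟨{x | ∀ i, x i ∈ S}, fun hT => ?_, ?_⟩
  · have := hT.volume_eq_zero hrn
    rw [EuclideanSpace.volume_setOf_forall_mem, Fintype.card_fin] at this
    exact hS (pow_eq_zero_iff'.1 this).1
  · calc #{x : EuclideanSpace ℝ (Fin n) | ∀ i, x i ∈ S} ≤ #S :=
          EuclideanSpace.mk_setOf_forall_mem_le hS_inf n
      _ ≤ #(A k) := Cardinal.mk_image_le
      _ ≤ #H := Cardinal.mk_le_mk_of_subset (hHA ▸ subset_iUnion A k)

end

theorem nonOf_le_nonOf {α : Type*} {J K : Set (Set α)} (hK : ∃ H, H ∉ K)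
    (h : ∀ H ∉ K, ∃ T ∉ J, #T ≤ #H) : nonOf J ≤ nonOf K := by
  have hmem : nonOf K ∈ {c | ∃ H : Set α, H ∉ K ∧ #H = c} :=
    csInf_mem (hK.elim fun H hH => ⟨_, H, hH, rfl⟩)
  obtain ⟨H, hH, hHK⟩ := hmem
  obtain ⟨T, hT, hTH⟩ := h H hH
  calc nonOf J ≤ #T := csInf_le' ⟨T, hT, rfl⟩
    _ ≤ #H := hTH
    _ = nonOf K := hHK

theorem stmt6_general (n : ℕ) (r : ℝ) (hr0 : 0 < r) (hrn : r < n) :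
    nonOf {H : Set (EuclideanSpace ℝ (Fin n)) | SigmaFiniteHausdorff n r H} =
      nonOf {H : Set (EuclideanSpace ℝ (Fin n)) | μH[r] H = 0} := by
  have huniv := not_sigmaFiniteHausdorff_univ (n := n) hrn
  refine le_antisymm ?_ ?_
  · exact nonOf_le_nonOf ⟨univ, fun h => huniv (sigmaFiniteHausdorff_of_null h)⟩
      fun H hH => exists_not_sigmaFiniteHausdorff_mk_le hr0 hrn hH
  · exact nonOf_le_nonOf ⟨univ, huniv⟩
      fun H hH => ⟨H, fun h => hH (sigmaFiniteHausdorff_of_null h), le_rfl⟩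

/-- `non(I^r_{n,σ-fin}) = non(N^r_n)`. -/
theorem stmt6 (n : ℕ) (r : ℝ) (hn : 1 ≤ n) (hr0 : 0 < r) (hrn : r < n) :
    nonOf {H : Set (EuclideanSpace ℝ (Fin n)) | SigmaFiniteHausdorff n r H} =
      nonOf {H : Set (EuclideanSpace ℝ (Fin n)) | μH[r] H = 0} :=
  stmt6_general n r hr0 hrn
end
end

section
/- Let I be an ideal of subsets of ℝ (nonempty, closed under taking subsets and finite unions) with ℝ ∉ I, and suppose ℝ is the union of some subfamily of I. If add(I) = cov(I), then there exists a linear order ≺ on ℝ such that for every x ∈ ℝ the initial segment {y ∈ ℝ : y ≺ x} belongs to I (hence every proper initial segment of the ordering is in I). -/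
open MeasureTheory Set
open scoped ENNReal MeasureTheory

noncomputable section


/-!
Enumerate a cover `(A_ξ)_{ξ < κ}` of minimal size `κ = cov(I)` by members of `I`, and order the
points lexicographically by their rank (the least `ξ` with `x ∈ A_ξ`) and then by any fixed
linear order. Everything below `x` lies in `⋃_{ξ ≤ rank x} A_ξ`, a union of fewer than `κ`
members of `I` plus one more; since `add(I) = κ`, such a union is again in `I`.
-/

open scoped Cardinal

universe u

section IdealCardinals

variable {α : Type u} {J : Set (Set α)}

theorem sUnion_mem_of_mk_lt_addOf {S : Set (Set α)} (hS : S ⊆ J) (h : #S < addOf J) :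
    ⋃₀ S ∈ J := by
  by_contra hU
  exact (csInf_le' ⟨S, hS, hU, rfl⟩ : addOf J ≤ #S).not_gt h

theorem iUnion_mem_of_mk_lt_addOf {ι : Type u} {f : ι → Set α} (hf : ∀ i, f i ∈ J)
    (h : #ι < addOf J) : ⋃ i, f i ∈ J := by
  rw [← sUnion_range]
  exact sUnion_mem_of_mk_lt_addOf (range_subset_iff.2 hf) (Cardinal.mk_range_le.trans_lt h)

theorem exists_sUnion_eq_univ_mk_eq_covOf (h : ∃ S ⊆ J, ⋃₀ S = univ) :
    ∃ S ⊆ J, ⋃₀ S = univ ∧ #S = covOf J := by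
  obtain ⟨S, hS, hU⟩ := h
  exact csInf_mem (s := {c | ∃ S ⊆ J, ⋃₀ S = univ ∧ #S = c}) ⟨_, S, hS, hU, rfl⟩

theorem exists_cover_indexed_toType_ord_covOf (h : ∃ S ⊆ J, ⋃₀ S = univ) :
    ∃ f : (covOf J).ord.ToType → Set α, (∀ i, f i ∈ J) ∧ ∀ x, ∃ i, x ∈ f i := by
  obtain ⟨S, hSJ, hSU, hS⟩ := exists_sUnion_eq_univ_mk_eq_covOf h
  obtain ⟨e⟩ : Nonempty (S ≃ (covOf J).ord.ToType) := Cardinal.eq.1 (by simpa using hS)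
  refine ⟨fun i => e.symm i, fun i => hSJ (e.symm i).2, fun x => ?_⟩
  obtain ⟨A, hA, hxA⟩ := hSU.symm ▸ mem_univ x
  exact ⟨e ⟨A, hA⟩, by simpa using hxA⟩

end IdealCardinals

section CoverRank

variable {α ι : Type*} [LinearOrder ι] [WellFoundedLT ι] {f : ι → Set α}

def coverRank (hf : ∀ x, ∃ i, x ∈ f i) (x : α) : ι :=
  wellFounded_lt.min {i | x ∈ f i} (hf x)

theorem mem_coverRank (hf : ∀ x, ∃ i, x ∈ f i) (x : α) : x ∈ f (coverRank hf x) :=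
  wellFounded_lt.min_mem {i | x ∈ f i} (hf x)

variable [LinearOrder α]

def coverRankLex (hf : ∀ x, ∃ i, x ∈ f i) : α ↪ ι ×ₗ α where
  toFun x := toLex (coverRank hf x, x)
  inj' _ _ h := congrArg Prod.snd (toLex.injective h)

theorem setOf_coverRankLex_lt_subset (hf : ∀ x, ∃ i, x ∈ f i) (x : α) :
    {y | coverRankLex hf y < coverRankLex hf x} ⊆
      (⋃ i : Iio (coverRank hf x), f i) ∪ f (coverRank hf x) := by
  intro y hy
  have hle : coverRank hf y ≤ coverRank hf x := (Prod.Lex.toLex_lt_toLex'.1 hy).1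
  rcases hle.lt_or_eq with hlt | heq
  · exact Or.inl (mem_iUnion.2 ⟨⟨_, hlt⟩, mem_coverRank hf y⟩)
  · exact Or.inr (heq ▸ mem_coverRank hf y)

end CoverRank

theorem exists_isStrictTotalOrder_forall_setOf_mem {α : Type u} (I : Set (Set α))
    (hdown : ∀ A B : Set α, A ⊆ B → B ∈ I → A ∈ I)
    (hunion : ∀ A ∈ I, ∀ B ∈ I, A ∪ B ∈ I)
    (hcov : ∃ S ⊆ I, ⋃₀ S = univ) (hle : covOf I ≤ addOf I) :
    ∃ lt : α → α → Prop, IsStrictTotalOrder α lt ∧ ∀ x, {y | lt y x} ∈ I := by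
  let _ := IsWellOrder.linearOrder (WellOrderingRel (α := α))
  obtain ⟨f, hfI, hf⟩ := exists_cover_indexed_toType_ord_covOf hcov
  let g := coverRankLex hf
  refine ⟨g ⁻¹'o (· < ·), (RelEmbedding.preimage g (· < ·)).isStrictTotalOrder, fun x => ?_⟩
  refine hdown _ _ (setOf_coverRankLex_lt_subset hf x) (hunion _ ?_ _ (hfI _))
  refine iUnion_mem_of_mk_lt_addOf (fun i => hfI i) (lt_of_lt_of_le ?_ hle)
  simpa using Cardinal.mk_Iio_lt (coverRank hf x)

theorem stmt8_general (I : Set (Set ℝ))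
    (hdown : ∀ A B : Set ℝ, A ⊆ B → B ∈ I → A ∈ I)
    (hunion : ∀ A ∈ I, ∀ B ∈ I, A ∪ B ∈ I)
    (hcov : ∃ S ⊆ I, ⋃₀ S = univ)
    (heq : addOf I = covOf I) :
    ∃ lt : ℝ → ℝ → Prop, IsStrictTotalOrder ℝ lt ∧ ∀ x : ℝ, {y : ℝ | lt y x} ∈ I :=
  exists_isStrictTotalOrder_forall_setOf_mem I hdown hunion hcov heq.ge

/-- If `I` is an ideal on `ℝ` (with `ℝ ∉ I`) such that `ℝ` is covered by some subfamily
of `I`, and `add(I) = cov(I)`, then there is a linear (strict total) order on `ℝ` all of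
whose proper initial segments are in `I`. -/
theorem stmt8 (I : Set (Set ℝ)) (hne : I.Nonempty)
    (hdown : ∀ A B : Set ℝ, A ⊆ B → B ∈ I → A ∈ I)
    (hunion : ∀ A ∈ I, ∀ B ∈ I, A ∪ B ∈ I)
    (hproper : (univ : Set ℝ) ∉ I)
    (hcov : ∃ S ⊆ I, ⋃₀ S = univ)
    (heq : addOf I = covOf I) :
    ∃ lt : ℝ → ℝ → Prop, IsStrictTotalOrder ℝ lt ∧ ∀ x : ℝ, {y : ℝ | lt y x} ∈ I :=
  stmt8_general I hdown hunion hcov heq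
end
end

section
/- Let n ≥ 1, M ≥ 1 and k be natural numbers. Let C be the collection of all cubes of the form ∏_{i<n} [j_i/M, (j_i+1)/M] ⊆ ℝⁿ with j_i ∈ {0, …, M−1} for each i < n, and let ℂ be the collection of all sets that are unions of 2^k elements of C. Then for every partition of ℂ into 2^k pieces X_0, …, X_{2^k−1}, there is some i < 2^k such that the union of the members of X_i contains [0,1]^n. -/
open MeasureTheory Set
open scoped ENNReal MeasureTheory

noncomputable section


/-- The unit cube \`[0,1]^n ⊆ ℝⁿ\`. -/
def unitCube (n : ℕ) : Set (EuclideanSpace ℝ (Fin n)) :=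
  {x | ∀ i, x i ∈ Set.Icc (0 : ℝ) 1}

/-- The collection of the cubes \`∏_{i<n} [jᵢ/M, (jᵢ+1)/M]\` with \`jᵢ ∈ {0, …, M−1}\`. -/
def gridCubes (n M : ℕ) : Set (Set (EuclideanSpace ℝ (Fin n))) :=
  { Q | ∃ j : Fin n → ℕ, (∀ i, j i < M) ∧
      Q = {x | ∀ i, x i ∈ Set.Icc ((j i : ℝ) / M) (((j i : ℝ) + 1) / M)} }

/-- The collection of all sets that are unions of \`2^k\` cubes from \`gridCubes n M\`. -/
def cubeUnions (n M k : ℕ) : Set (Set (EuclideanSpace ℝ (Fin n))) :=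
  { S | ∃ f : Fin (2 ^ k) → Set (EuclideanSpace ℝ (Fin n)),
      (∀ i, f i ∈ gridCubes n M) ∧ S = ⋃ i, f i }

lemma mem_some_grid (n M : ℕ) (hM : 1 ≤ M) (x : EuclideanSpace ℝ (Fin n))
    (hx : x ∈ unitCube n) : ∃ Q ∈ gridCubes n M, x ∈ Q := by
  refine ⟨_, ⟨fun i => min ⌊x i * M⌋₊ (M - 1), fun i => ?_, rfl⟩, fun i => ?_⟩
  · have : M - 1 < M := by omega
    exact lt_of_le_of_lt (min_le_right _ _) this
  · obtain ⟨h0, h1⟩ := hx i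
    have hMpos : (0:ℝ) < M := by exact_mod_cast hM
    have hxM : 0 ≤ x i * M := by positivity
    constructor
    · rw [div_le_iff₀ hMpos]
      calc ((min ⌊x i * M⌋₊ (M-1) : ℕ) : ℝ) ≤ (⌊x i * M⌋₊ : ℝ) := by
            exact_mod_cast min_le_left _ _
        _ ≤ x i * M := Nat.floor_le hxM
    · rw [le_div_iff₀ hMpos]
      dsimp only
      rcases le_or_gt M ⌊x i * M⌋₊ with h | h
      · have : min ⌊x i * M⌋₊ (M-1) = M - 1 := by omega
        rw [this]
        have : ((M - 1 : ℕ) : ℝ) + 1 = M := by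
          have : (M - 1) + 1 = M := by omega
          exact_mod_cast this
        rw [this]
        nlinarith
      · have : min ⌊x i * M⌋₊ (M-1) = ⌊x i * M⌋₊ := by omega
        rw [this]
        have := Nat.lt_floor_add_one (x i * M)
        linarith

/-- For every partition of `ℂ = cubeUnions n M k` into `2^k` pieces, some piece has union
containing the unit cube `[0,1]^n`. -/
theorem stmt10 (n M k : ℕ) (hn : 1 ≤ n) (hM : 1 ≤ M)
    (X : Fin (2 ^ k) → Set (Set (EuclideanSpace ℝ (Fin n))))
    (hdisj : Pairwise (Function.onFun Disjoint X))
    (hpart : ⋃ i, X i = cubeUnions n M k) :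
    ∃ i, unitCube n ⊆ ⋃₀ X i := by
  by_contra h
  push_neg at h
  simp only [Set.not_subset] at h
  choose x hxcube hxnot using h
  choose Q hQgrid hxQ using fun i => mem_some_grid n M hM (x i) (hxcube i)
  have hS : (⋃ i, Q i) ∈ cubeUnions n M k := ⟨Q, hQgrid, rfl⟩
  rw [← hpart] at hS
  obtain ⟨i, hi⟩ := Set.mem_iUnion.mp hS
  exact hxnot i ⟨⋃ j, Q j, hi, Set.mem_iUnion.mpr ⟨i, hxQ i⟩⟩
end
end

section
/- Let n ≥ 1, M ≥ 1 and k be natural numbers. Let C be the collection of all cubes of the form ∏_{i<n} [j_i/M, (j_i+1)/M] ⊆ ℝⁿ with j_i ∈ {0, …, M−1} for each i < n, and let ℂ be the collection of all sets that are unions of 2^k elements of C. Then ν(ℂ) ≥ k+1, where ν is the norm function defined below. -/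
open MeasureTheory Set
open scoped ENNReal MeasureTheory

noncomputable section


/-- The norm function \`ν\`: \`nuGe n X j\` formalizes \`ν(X) ≥ j\`.  By convention
\`ν(X) ≥ 0\` always holds; \`ν(X) ≥ 1\` iff \`⋃₀ X = [0,1]^n\`; and \`ν(X) ≥ j+1\` (for \`j ≥ 1\`)
iff for every decomposition \`X = X₀ ∪ X₁\` some piece satisfies \`ν(Xᵢ) ≥ j\`. -/
def nuGe (n : ℕ) (X : Set (Set (EuclideanSpace ℝ (Fin n)))) : ℕ → Prop
  | 0 => True
  | 1 => ⋃₀ X = unitCube n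
  | (j + 2) => ∀ X₀ X₁ : Set (Set (EuclideanSpace ℝ (Fin n))),
      X = X₀ ∪ X₁ → nuGe n X₀ (j + 1) ∨ nuGe n X₁ (j + 1)

/-- `Hyp n j X`: for every decomposition of `X` into `2^j` pieces, some piece covers the
unit cube. -/
def Hyp (n j : ℕ) (X : Set (Set (EuclideanSpace ℝ (Fin n)))) : Prop :=
  ∀ P : Fin (2 ^ j) → Set (Set (EuclideanSpace ℝ (Fin n))),
    (∀ i, P i ⊆ X) → X ⊆ ⋃ i, P i → ∃ i, unitCube n ⊆ ⋃₀ P i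

lemma gridCube_subset_unitCube {n M : ℕ} (hM : 1 ≤ M)
    {Q : Set (EuclideanSpace ℝ (Fin n))} (hQ : Q ∈ gridCubes n M) : Q ⊆ unitCube n := by
  obtain ⟨j, hj, rfl⟩ := hQ
  intro x hx i
  have hMpos : (0:ℝ) < M := by exact_mod_cast hM
  have h := hx i
  constructor
  · have h0 : (0:ℝ) ≤ (j i : ℝ) / M := by positivity
    linarith [h.1]
  · have hle : ((j i : ℝ) + 1) / M ≤ 1 := by
      rw [div_le_one hMpos]
      have : (j i) + 1 ≤ M := hj i
      exact_mod_cast this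
    linarith [h.2]

lemma sUnion_cubeUnions_subset {n M k : ℕ} (hM : 1 ≤ M) :
    ⋃₀ cubeUnions n M k ⊆ unitCube n := by
  rintro x ⟨S, ⟨f, hf, rfl⟩, hx⟩
  obtain ⟨i, hi⟩ := mem_iUnion.1 hx
  exact gridCube_subset_unitCube hM (hf i) hi

lemma exists_gridCube_mem {n M : ℕ} (hM : 1 ≤ M) {x : EuclideanSpace ℝ (Fin n)}
    (hx : x ∈ unitCube n) : ∃ Q ∈ gridCubes n M, x ∈ Q := by
  have hMpos : (0:ℝ) < M := by exact_mod_cast hM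
  refine ⟨_, ⟨fun i => min ⌊x i * M⌋₊ (M - 1), fun i => ?_, rfl⟩, fun i => ?_⟩
  · dsimp only
    have := Nat.min_le_right ⌊x i * M⌋₊ (M - 1)
    omega
  · dsimp only
    set j := min ⌊x i * M⌋₊ (M - 1) with hjdef
    have hx0 : (0:ℝ) ≤ x i := (hx i).1
    have hx1 : x i ≤ 1 := (hx i).2
    constructor
    · rw [div_le_iff₀ hMpos]
      calc (j:ℝ) ≤ ⌊x i * M⌋₊ := by exact_mod_cast Nat.min_le_left _ _
        _ ≤ x i * M := Nat.floor_le (by positivity)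
    · rw [le_div_iff₀ hMpos]
      by_cases hc : ⌊x i * M⌋₊ ≤ M - 1
      · have hjj : j = ⌊x i * M⌋₊ := min_eq_left hc
        have hlt : x i * M < ⌊x i * M⌋₊ + 1 := Nat.lt_floor_add_one _
        rw [hjj]
        linarith
      · have hjj : j = M - 1 := min_eq_right (le_of_not_ge hc)
        have hMM : x i * M ≤ M := by nlinarith
        rw [hjj]
        have hcast : ((M - 1 : ℕ) : ℝ) + 1 = M := by
          have : ((M - 1 : ℕ) : ℝ) = (M : ℝ) - 1 := by
            push_cast [Nat.cast_sub hM]; ring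
          rw [this]; ring
        linarith

lemma hyp_nuGe {n : ℕ} : ∀ (j : ℕ) (X : Set (Set (EuclideanSpace ℝ (Fin n)))),
    ⋃₀ X ⊆ unitCube n → Hyp n j X → nuGe n X (j + 1) := by
  intro j
  induction j with
  | zero =>
    intro X hsub hhyp
    obtain ⟨i, hi⟩ := hhyp (fun _ => X) (fun _ => subset_rfl)
      (fun S hS => mem_iUnion.2 ⟨0, hS⟩)
    exact subset_antisymm hsub hi
  | succ j ih =>
    intro X hsub hhyp
    show nuGe n X (j + 2)
    intro X₀ X₁ hsplit
    have hor : Hyp n j X₀ ∨ Hyp n j X₁ := by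
      by_contra hcon
      push_neg at hcon
      obtain ⟨h0, h1⟩ := hcon
      unfold Hyp at h0 h1
      push_neg at h0 h1
      obtain ⟨P0, hP0sub, hP0cov, hP0⟩ := h0
      obtain ⟨P1, hP1sub, hP1cov, hP1⟩ := h1
      set P : Fin (2 ^ (j + 1)) → Set (Set (EuclideanSpace ℝ (Fin n))) :=
        fun i => if h : (i : ℕ) < 2 ^ j then P0 ⟨i, h⟩
          else P1 ⟨(i : ℕ) - 2 ^ j, by
            have h2 : (2:ℕ) ^ (j + 1) = 2 ^ j + 2 ^ j := by ring
            have h3 := i.isLt; omega⟩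
        with hPdef
      have hsub' : ∀ i, P i ⊆ X := by
        intro i
        rw [hPdef]
        dsimp only
        split
        · exact (hP0sub _).trans (hsplit ▸ subset_union_left)
        · exact (hP1sub _).trans (hsplit ▸ subset_union_right)
      have hcov' : X ⊆ ⋃ i, P i := by
        intro S hS
        rw [hsplit] at hS
        rcases hS with hS | hS
        · obtain ⟨i, hi⟩ := mem_iUnion.1 (hP0cov hS)
          refine mem_iUnion.2 ⟨⟨(i : ℕ), by
            have h2 : (2:ℕ) ^ (j + 1) = 2 ^ j + 2 ^ j := by ring
            have h3 := i.isLt; omega⟩, ?_⟩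
          rw [hPdef]
          dsimp only
          rw [dif_pos i.isLt]
          simpa using hi
        · obtain ⟨i, hi⟩ := mem_iUnion.1 (hP1cov hS)
          refine mem_iUnion.2 ⟨⟨2 ^ j + (i : ℕ), by
            have h2 : (2:ℕ) ^ (j + 1) = 2 ^ j + 2 ^ j := by ring
            have h3 := i.isLt; omega⟩, ?_⟩
          rw [hPdef]
          dsimp only
          rw [dif_neg (by omega)]
          have : 2 ^ j + (i : ℕ) - 2 ^ j = (i : ℕ) := by omega
          simp only [this]
          simpa using hi
      obtain ⟨i, hi⟩ := hhyp P hsub' hcov'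
      rw [hPdef] at hi
      dsimp only at hi
      split at hi
      · exact hP0 _ hi
      · exact hP1 _ hi
    rcases hor with h | h
    · left
      exact ih X₀ ((sUnion_mono (hsplit ▸ subset_union_left)).trans hsub) h
    · right
      exact ih X₁ ((sUnion_mono (hsplit ▸ subset_union_right)).trans hsub) h

lemma hyp_cubeUnions {n M k : ℕ} (hM : 1 ≤ M) : Hyp n k (cubeUnions n M k) := by
  intro P hPsub hPcov
  by_contra hcon
  push_neg at hcon
  have hy : ∀ i, ∃ y, y ∈ unitCube n ∧ y ∉ ⋃₀ P i := by
    intro i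
    have := hcon i
    rw [not_subset] at this
    obtain ⟨y, hy1, hy2⟩ := this
    exact ⟨y, hy1, hy2⟩
  choose y hy1 hy2 using hy
  have hQ : ∀ i, ∃ Q ∈ gridCubes n M, y i ∈ Q := fun i => exists_gridCube_mem hM (hy1 i)
  choose Q hQ1 hQ2 using hQ
  have hS : (⋃ i, Q i) ∈ cubeUnions n M k := ⟨Q, hQ1, rfl⟩
  obtain ⟨i, hi⟩ := mem_iUnion.1 (hPcov hS)
  exact hy2 i ⟨_, hi, mem_iUnion.2 ⟨i, hQ2 i⟩⟩

/-- `ν(ℂ_k) ≥ k + 1`. -/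
theorem stmt11 (n M k : ℕ) (hn : 1 ≤ n) (hM : 1 ≤ M) :
    nuGe n (cubeUnions n M k) (k + 1) :=
  hyp_nuGe k _ (sUnion_cubeUnions_subset hM) (hyp_cubeUnions hM)
end
end
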